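/- On the elliptic curve E : y^2 + 7102196·xy + 50689165733152681735·y = x^3 + 9577255322635·x^2 over Q, the point (0,0) is a rational point of order exactly 5. -/

import Mathlib

/-!
On a Weierstrass curve with `a₄ = a₆ = 0` the tangent at `P = (0, 0)` is horizontal, so
`2P = (-a₂, a₁a₂ - a₃)`. When moreover `a₁a₂a₃ = a₂³ + a₃²`, as for `E`, the tangent at `2P` meets
the curve again at `P`, i.e. `4P = -P`. Hence `5P = 0` with `P ≠ 0`, and `5` is prime.
-/

def E : WeierstrassCurve.Affine ℚ :=
  ⟨7102196, 9577255322635, 50689165733152681735, 0, 0⟩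

lemma addOrderOf_eq_five {G : Type*} [AddGroup G] {P : G} (hP : P ≠ 0) (h : 2 • 2 • P = -P) :
    addOrderOf P = 5 :=
  have : Fact (Nat.Prime 5) := ⟨by norm_num⟩
  addOrderOf_eq_prime
    (by rw [show 5 = 2 * 2 + 1 from rfl, succ_nsmul, mul_nsmul, h, neg_add_cancel]) hP

namespace WeierstrassCurve.Affine

variable {F : Type*} [Field F] {W : WeierstrassCurve.Affine F}

lemma nonsingular_zero_zero_of_a₃_ne_zero (ha₄ : W.a₄ = 0) (ha₆ : W.a₆ = 0) (ha₃ : W.a₃ ≠ 0) :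
    W.Nonsingular 0 0 := by
  rw [nonsingular_iff', equation_iff']
  simp [ha₄, ha₆, ha₃]

lemma nonsingular_neg_a₂ (ha₄ : W.a₄ = 0) (ha₆ : W.a₆ = 0) (h : W.a₁ * W.a₂ ≠ W.a₃) :
    W.Nonsingular (-W.a₂) (W.a₁ * W.a₂ - W.a₃) := by
  rw [nonsingular_iff', equation_iff', ha₄, ha₆]
  refine ⟨by ring, Or.inr ?_⟩
  rw [← sub_ne_zero] at h
  convert h using 1
  ring

namespace Point

variable [DecidableEq F]

lemma two_nsmul_some_zero_zero (ha₄ : W.a₄ = 0) (ha₆ : W.a₆ = 0) (ha₃ : W.a₃ ≠ 0)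
    (h : W.a₁ * W.a₂ ≠ W.a₃) :
    2 • some 0 0 (nonsingular_zero_zero_of_a₃_ne_zero ha₄ ha₆ ha₃) =
      some _ _ (nonsingular_neg_a₂ ha₄ ha₆ h) := by
  have hy : (0 : F) ≠ W.negY 0 0 := by simpa [negY] using ha₃
  rw [two_nsmul, add_self_of_Y_ne hy, some.injEq, slope_of_Y_ne rfl hy]
  simp [addX, addY, negAddY, negY, ha₄]

lemma two_nsmul_some_neg_a₂ (ha₄ : W.a₄ = 0) (ha₆ : W.a₆ = 0) (ha₃ : W.a₃ ≠ 0)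
    (h : W.a₁ * W.a₂ ≠ W.a₃) (ha₂ : W.a₂ ≠ 0) (hW : W.a₁ * W.a₂ * W.a₃ = W.a₂ ^ 3 + W.a₃ ^ 2) :
    2 • some _ _ (nonsingular_neg_a₂ ha₄ ha₆ h) =
      -some 0 0 (nonsingular_zero_zero_of_a₃_ne_zero ha₄ ha₆ ha₃) := by
  have hy : W.a₁ * W.a₂ - W.a₃ ≠ W.negY (-W.a₂) (W.a₁ * W.a₂ - W.a₃) := by
    rw [negY]
    contrapose! h
    linear_combination h
  have hslope : W.slope (-W.a₂) (-W.a₂) (W.a₁ * W.a₂ - W.a₃) (W.a₁ * W.a₂ - W.a₃) =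
      (W.a₃ - W.a₁ * W.a₂) / W.a₂ := by
    rw [slope_of_Y_ne rfl hy, div_eq_div_iff (sub_ne_zero.mpr hy) ha₂, negY, ha₄]
    linear_combination -hW
  rw [two_nsmul, add_self_of_Y_ne hy, neg_some, some.injEq, hslope]
  have hx : W.addX (-W.a₂) (-W.a₂) ((W.a₃ - W.a₁ * W.a₂) / W.a₂) = 0 := by
    rw [addX]
    field_simp
    linear_combination -hW
  refine ⟨hx, ?_⟩
  rw [addY, negAddY, hx, negY, negY]
  field_simp
  ring

/-- Up to the scaling `u = a₃ / a₂`, the condition `hW` is the Tate normal form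
`y² + (1 - c)xy - by = x³ - bx²` with `b = c`, the universal curve with a point of order 5. -/
theorem addOrderOf_some_zero_zero (ha₄ : W.a₄ = 0) (ha₆ : W.a₆ = 0) (ha₃ : W.a₃ ≠ 0)
    (hW : W.a₁ * W.a₂ * W.a₃ = W.a₂ ^ 3 + W.a₃ ^ 2) :
    addOrderOf (some 0 0 (nonsingular_zero_zero_of_a₃_ne_zero ha₄ ha₆ ha₃)) = 5 := by
  have ha₂ : W.a₂ ≠ 0 := by
    rintro ha₂
    apply ha₃
    simpa [ha₂] using hW.symm
  have hQ : W.a₁ * W.a₂ ≠ W.a₃ := by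
    intro h
    apply ha₂
    rw [h] at hW
    exact pow_eq_zero_iff (n := 3) (by norm_num) |>.mp (by linear_combination -hW)
  refine addOrderOf_eq_five (some_ne_zero _) ?_
  rw [two_nsmul_some_zero_zero ha₄ ha₆ ha₃ hQ, two_nsmul_some_neg_a₂ ha₄ ha₆ ha₃ hQ ha₂ hW]

end Point
end WeierstrassCurve.Affine

/-- On the smallest-conductor rank-8 curve with torsion `ℤ/5ℤ`, the point `(0,0)` has
order exactly 5. -/
theorem point_order_five :
    ∃ h : E.Nonsingular 0 0, addOrderOf (WeierstrassCurve.Affine.Point.some _ _ h) = 5 :=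
  ⟨_, WeierstrassCurve.Affine.Point.addOrderOf_some_zero_zero (W := E) rfl rfl (by norm_num [E])
    (by norm_num [E])⟩
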